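/- arXiv:0908.0542 — 3 statements merged into one kernel-verified Lean document; each statement's English description precedes it below -/
import Mathlib

section
/- Fix nonnegative half-integers a, b. Define the R-matrix R : V^a ⊗ V^b → V^b ⊗ V^a on basis vectors by R(g^a_u ⊗ g^b_v) = Σ_{n ≥ 0} [n]!(q−q^{−1})^n [a−u choose n][a+u+n choose n] q^{2uv−n(u−v)−n(n+1)/2} g^b_{v−n} ⊗ g^a_{u+n}, the sum over n with |u+n| ≤ a and |v−n| ≤ b, and define R₋ : V^b ⊗ V^a → V^a ⊗ V^b by R₋(g^b_v ⊗ g^a_u) = Σ_{n ≥ 0} [n]!(q^{−1}−q)^n q^{−2vu+n(u−v)+n(n+1)/2} [a−u choose n][a+u+n choose n] g^a_{u+n} ⊗ g^b_{v−n}, with the same range of summation. Then R₋ ∘ R is the identity of V^a ⊗ V^b (equivalently, for every half-integer N ≥ 0 and weights u, v, Σ_{n+m=N, n,m ≥ 0} of the product of the corresponding matrix entries equals δ_{N,0}). -/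
/-!
Inside the window `|u + 2N| ≤ a`, `|v - 2N| ≤ b` the `n`-th product of entries factors as
a constant depending only on `N` times `(-1)^n q^{n(N-1)} [N choose n]`: the factorials combine
through `[n]! [A choose n] · [N-n]! [A-n choose N-n] = [A]!/[A-N]!` and trinomial revision,
and the `q`-exponents of the two entries add up to `n(N-1)` plus a term independent of `n`.
The alternating sum `T_N = Σ (-1)^n q^{n(N-1)} [N choose n]` satisfies
`T_{N+1} = (1 - q^{2N}) T_N`, so it vanishes for `N ≥ 1`. Outside the window every `R₋`-entry
of the sum vanishes.
-/

noncomputable section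
open scoped Classical

namespace QSpin

/-- The ambient field: rational functions over `ℂ` (which contains `ℚ(i)`),
in a variable `X` which represents the formal fourth root `q^(1/4)`. -/
abbrev K : Type := RatFunc ℂ

/-- `X` represents `q^(1/4)`. -/
def X : K := RatFunc.X

/-- The quantum variable `q = X^4`. -/
def q : K := X ^ 4

/-- `i = √-1`, as a constant of `K`. -/
def ii : K := RatFunc.C Complex.I

/-- `q` raised to a rational power `r` (meaningful whenever `4 * r ∈ ℤ`). -/
def qpow (r : ℚ) : K := X ^ (4 * r).num

/-- Half of an integer, as a rational number: a half-integer is encoded by its double. -/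
def hf (n : ℤ) : ℚ := (n : ℚ) / 2

/-- Integer powers of `i`. -/
def ipow (n : ℤ) : K := ii ^ n

/-- Integer powers of `-1`. -/
def m1pow (n : ℤ) : K := (-1 : K) ^ n

/-- The quantum integer `[n] = (q^n - q^(-n))/(q - q⁻¹)`. -/
def qint (n : ℤ) : K := (q ^ n - q ^ (-n)) / (q - q⁻¹)

/-- The quantum factorial `[n]!`. -/
def qfact (n : ℕ) : K := ∏ j ∈ Finset.range n, qint (j + 1)

/-- The quantum factorial of an integer (zero for negative arguments). -/
def qfactz (n : ℤ) : K := if 0 ≤ n then qfact n.toNat else 0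

/-- The quantum binomial `[n choose k]`, vanishing unless `0 ≤ k ≤ n`. -/
def qbin (n k : ℤ) : K :=
  if 0 ≤ k ∧ k ≤ n then qfactz n / (qfactz k * qfactz (n - k)) else 0

/-- Admissibility of a triple of half-integers (encoded by their doubles):
all nonnegative, total sum an integer (i.e. the sum of the doubles is even), and
the triangular inequalities hold. -/
def Adm (a b c : ℤ) : Prop :=
  0 ≤ a ∧ 0 ≤ b ∧ 0 ≤ c ∧ 2 ∣ (a + b + c) ∧ c ≤ a + b ∧ a ≤ b + c ∧ b ≤ c + a

/-- The quantum Clebsch-Gordan coefficient `C^{a,b,c}_{u,v,t}`; all six half-integer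
parameters are encoded by their doubles. -/
def CG (a b c u v t : ℤ) : K :=
  if u + v = t then
    ipow ((c - a - b) / 2) * m1pow ((b - v) / 2 - (c - t) / 2) *
      qpow ((hf b - hf v) * (hf b + hf v + 1) / 2 - (hf a - hf u) * (hf a + hf u + 1) / 2) *
      (qfactz ((a + b - c) / 2) * qfactz ((b + c - a) / 2) * qfactz ((c + a - b) / 2) /
        qfactz c) *
      ∑ z ∈ Finset.range (((c - t) / 2).toNat + 1),
        m1pow z *
          qpow (((z : ℚ) - (((c - t) / 2 - (z : ℤ) : ℤ) : ℚ)) * (hf c + hf t + 1) / 2) *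
          qbin ((a + u) / 2 + z) ((a + c - b) / 2) *
          qbin ((b + v) / 2 + ((c - t) / 2 - (z : ℤ))) ((b + c - a) / 2) *
          qbin ((c - t) / 2) z
  else 0

/-- The coefficient `W^{a,b,c}_{u,v,t} = C^{a,b,c}_{u,v,-t} · i^{-2t} q^{-t} · [2c]!`. -/
def W (a b c u v t : ℤ) : K := CG a b c u v (-t) * ipow (-t) * qpow (-(hf t)) * qfactz c

/-- The coefficient `P^{a,b,c}_{u,v,t} = C^{a,c,b}_{-u,t,v} · i^{2u} q^{u} / [2a]!`. -/
def Pc (a b c u v t : ℤ) : K := CG a c b (-u) t v * ipow u * qpow (hf u) / qfactz a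

/-- The coefficient `M^{a,b,c}_{u,v,t} = P^{a,b,c}_{u,v,-t} · i^{-2t} q^{-t} / [2c]!`. -/
def M (a b c u v t : ℤ) : K := Pc a b c u v (-t) * ipow (-t) * qpow (-(hf t)) / qfactz c


/-- The `R`-matrix entry: the coefficient of `g^b_{v-n} ⊗ g^a_{u+n}` in
`R(g^a_u ⊗ g^b_v)`, namely `[n]!(q−q^{−1})^n [a−u choose n][a+u+n choose n]
q^{2uv−n(u−v)−n(n+1)/2}`, nonzero only when `|u+n| ≤ a` and `|v−n| ≤ b`.
Half-integers are encoded by their doubles. -/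
def Rent (a b u v : ℤ) (n : ℕ) : K :=
  if |u + 2 * (n : ℤ)| ≤ a ∧ |v - 2 * (n : ℤ)| ≤ b then
    qfact n * (q - q⁻¹) ^ n * qbin ((a - u) / 2) n * qbin ((a + u) / 2 + n) n *
      qpow (2 * hf u * hf v - (n : ℚ) * (hf u - hf v) - (n : ℚ) * ((n : ℚ) + 1) / 2)
  else 0

/-- The inverse `R`-matrix entry: the coefficient of `g^a_{u+n} ⊗ g^b_{v-n}` in
`R₋(g^b_v ⊗ g^a_u)`, namely `[n]!(q^{−1}−q)^n q^{−2vu+n(u−v)+n(n+1)/2}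
[a−u choose n][a+u+n choose n]`, nonzero only when `|u+n| ≤ a` and `|v−n| ≤ b`. -/
def Rinvent (a b u v : ℤ) (n : ℕ) : K :=
  if |u + 2 * (n : ℤ)| ≤ a ∧ |v - 2 * (n : ℤ)| ≤ b then
    qfact n * (q⁻¹ - q) ^ n *
      qpow (-(2 * hf v * hf u) + (n : ℚ) * (hf u - hf v) + (n : ℚ) * ((n : ℚ) + 1) / 2) *
      qbin ((a - u) / 2) n * qbin ((a + u) / 2 + n) n
  else 0

lemma pow_mul_neg_pow_sub {R : Type*} [CommRing R] (x : R) {n N : ℕ} (hn : n ≤ N) :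
    x ^ n * (-x) ^ (N - n) = (-1) ^ N * (-1) ^ n * x ^ N := by
  obtain ⟨m, rfl⟩ := Nat.exists_eq_add_of_le hn
  have hsq : (-1 : R) ^ n * (-1) ^ n = 1 := by rw [← mul_pow]; simp
  rw [Nat.add_sub_cancel_left, neg_pow, pow_add, pow_add]
  linear_combination -(x ^ n * x ^ m * (-1) ^ m) * hsq

lemma X_ne_zero : (X : K) ≠ 0 := RatFunc.X_ne_zero

lemma q_ne_zero : (q : K) ≠ 0 := pow_ne_zero _ X_ne_zero

lemma intDegree_X_zpow (k : ℤ) : RatFunc.intDegree ((RatFunc.X : K) ^ k) = k := by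
  have hnat (m : ℕ) : RatFunc.intDegree ((RatFunc.X : K) ^ m) = m := by
    rw [← RatFunc.algebraMap_X, ← map_pow, RatFunc.intDegree_polynomial,
      Polynomial.natDegree_X_pow]
  cases k with
  | ofNat m => exact hnat m
  | negSucc m => rw [zpow_negSucc, RatFunc.intDegree_inv, hnat]; rfl

lemma q_zpow (k : ℤ) : (q : K) ^ k = X ^ (4 * k) := by
  rw [q, ← zpow_natCast, ← zpow_mul]
  norm_num

lemma q_zpow_injective : Function.Injective fun k : ℤ => (q : K) ^ k := by
  intro m n h
  have h4 := congrArg RatFunc.intDegree h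
  simp only [q_zpow, X, intDegree_X_zpow] at h4
  omega

lemma qpow_eq_X_zpow {r : ℚ} {k : ℤ} (h : r * 4 = k) : qpow r = X ^ k := by
  rw [qpow, mul_comm, h, Rat.num_intCast]

lemma q_sub_q_inv_ne_zero : (q : K) - q⁻¹ ≠ 0 := by
  rw [sub_ne_zero, ← zpow_one q, ← zpow_neg]
  exact q_zpow_injective.ne (by norm_num)

lemma qint_ne_zero {n : ℤ} (hn : n ≠ 0) : qint n ≠ 0 :=
  div_ne_zero (sub_ne_zero.2 (q_zpow_injective.ne (by omega))) q_sub_q_inv_ne_zero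

lemma qint_add (s t : ℤ) : qint (s + t) = q ^ (-t) * qint s + q ^ s * qint t := by
  have hq := q_ne_zero
  simp only [qint, zpow_add₀ hq, zpow_neg, neg_add]
  field_simp
  ring

lemma qfact_ne_zero (n : ℕ) : qfact n ≠ 0 :=
  Finset.prod_ne_zero_iff.2 fun j _ => qint_ne_zero (by omega)

lemma qfactz_of_nonneg {n : ℤ} (hn : 0 ≤ n) : qfactz n = qfact n.toNat := if_pos hn

lemma qfactz_natCast (n : ℕ) : qfactz n = qfact n := by
  rw [qfactz_of_nonneg n.cast_nonneg, Int.toNat_natCast]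

lemma qfactz_zero : qfactz 0 = 1 := qfactz_natCast 0

lemma qfactz_ne_zero {n : ℤ} (hn : 0 ≤ n) : qfactz n ≠ 0 := by
  rw [qfactz_of_nonneg hn]
  exact qfact_ne_zero _

lemma qfactz_of_pos {n : ℤ} (hn : 0 < n) : qfactz n = qfactz (n - 1) * qint n := by
  obtain ⟨m, rfl⟩ : ∃ m : ℕ, n = m + 1 := ⟨(n - 1).toNat, by omega⟩
  rw [add_sub_cancel_right, ← Nat.cast_succ, qfactz_natCast, qfactz_natCast, qfact,
    Finset.prod_range_succ, qfact]
  push_cast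
  rfl

lemma qbin_of_le {n k : ℤ} (h₀ : 0 ≤ k) (h₁ : k ≤ n) :
    qbin n k = qfactz n / (qfactz k * qfactz (n - k)) := if_pos ⟨h₀, h₁⟩

lemma qbin_of_neg {n k : ℤ} (h : k < 0) : qbin n k = 0 := if_neg (by omega)

lemma qbin_of_lt {n k : ℤ} (h : n < k) : qbin n k = 0 := if_neg (by omega)

lemma qbin_zero_right {n : ℤ} (hn : 0 ≤ n) : qbin n 0 = 1 := by
  rw [qbin_of_le le_rfl hn, qfactz_zero, one_mul, sub_zero, div_self (qfactz_ne_zero hn)]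

lemma qbin_self {n : ℤ} (hn : 0 ≤ n) : qbin n n = 1 := by
  rw [qbin_of_le hn le_rfl, sub_self, qfactz_zero, mul_one, div_self (qfactz_ne_zero hn)]

lemma qbin_succ_left {n k : ℤ} (hn : 0 ≤ n) :
    qbin (n + 1) k = q ^ (-k) * qbin n k + q ^ (n + 1 - k) * qbin n (k - 1) := by
  rcases lt_or_ge k 0 with hk | hk
  · rw [qbin_of_neg hk, qbin_of_neg hk, qbin_of_neg (by omega)]
    ring
  rcases eq_or_lt_of_le hk with rfl | hk
  · rw [qbin_zero_right (by omega), qbin_zero_right hn, qbin_of_neg (by omega)]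
    simp
  rcases lt_trichotomy k (n + 1) with hkn | rfl | hkn
  · have h₁ : qfactz (n + 1) = qfactz n * qint (n + 1) := by
      rw [qfactz_of_pos (by omega), add_sub_cancel_right]
    have h₂ : qfactz (n + 1 - k) = qfactz (n - k) * qint (n + 1 - k) := by
      rw [qfactz_of_pos (by omega), show n + 1 - k - 1 = n - k by ring]
    have h₃ := qfactz_of_pos hk
    have h₄ : qint (n + 1) = q ^ (-k) * qint (n + 1 - k) + q ^ (n + 1 - k) * qint k := by
      rw [← qint_add]
      ring_nf
    have := qfactz_ne_zero (show 0 ≤ k - 1 by omega)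
    have := qfactz_ne_zero (show 0 ≤ n - k by omega)
    have := qint_ne_zero (show k ≠ 0 by omega)
    have := qint_ne_zero (show n + 1 - k ≠ 0 by omega)
    rw [qbin_of_le (by omega) (by omega), qbin_of_le (by omega) (by omega),
      qbin_of_le (by omega) (by omega), show n - (k - 1) = n + 1 - k by ring, h₁, h₂, h₃, h₄]
    field_simp
  · rw [qbin_self (by omega), qbin_of_lt (by omega), sub_self, add_sub_cancel_right,
      qbin_self hn]
    simp
  · rw [qbin_of_lt hkn, qbin_of_lt (by omega), qbin_of_lt (by omega)]
    ring

lemma qfact_mul_qbin {A : ℤ} {n : ℕ} (h : (n : ℤ) ≤ A) :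
    qfact n * qbin A n = qfactz A / qfactz (A - n) := by
  rw [qbin_of_le n.cast_nonneg h, qfactz_natCast]
  have := qfact_ne_zero n
  field_simp

lemma qbin_trinomial_revision {C n N : ℤ} (hC : 0 ≤ C) (hn : 0 ≤ n) (hnN : n ≤ N) :
    qbin (C + n) n * qbin (C + N) (N - n) = qbin (C + N) N * qbin N n := by
  rw [qbin_of_le hn (by omega), qbin_of_le (by omega) (by omega), qbin_of_le (by omega) (by omega),
    qbin_of_le hn hnN, show C + n - n = C by ring, show C + N - (N - n) = C + n by ring,
    show C + N - N = C by ring]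
  have := qfactz_ne_zero hn
  have := qfactz_ne_zero hC
  have := qfactz_ne_zero (show 0 ≤ N - n by omega)
  have := qfactz_ne_zero (show 0 ≤ C + n by omega)
  have := qfactz_ne_zero (show 0 ≤ N by omega)
  field_simp

def altQbinSum (N : ℕ) : K :=
  ∑ n ∈ Finset.range (N + 1), (-1) ^ n * q ^ ((n : ℤ) * (N - 1)) * qbin N n

lemma altQbinSum_zero : altQbinSum 0 = 1 := by
  simp [altQbinSum, qbin_zero_right]

/-- By the q-Pascal rule the sum for `N + 1` is the sum for `N` plus a shifted copy of it,
and the shift reproduces it up to the factor `-q ^ (2 * N)`. -/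
lemma altQbinSum_succ (N : ℕ) :
    altQbinSum (N + 1) = (1 - q ^ (2 * (N : ℤ))) * altQbinSum N := by
  have hq := q_ne_zero
  have hpascal : altQbinSum (N + 1) =
      ∑ n ∈ Finset.range (N + 2), (-1) ^ n * q ^ ((n : ℤ) * (N - 1)) * qbin N n +
        ∑ n ∈ Finset.range (N + 2), (-1) ^ n * q ^ ((n : ℤ) * N + N + 1 - n) * qbin N (n - 1) := by
    rw [altQbinSum, ← Finset.sum_add_distrib]
    refine Finset.sum_congr rfl fun n _ => ?_
    have e₁ : q ^ ((n : ℤ) * (N + 1 - 1)) * q ^ (-(n : ℤ)) = q ^ ((n : ℤ) * (N - 1)) := by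
      rw [← zpow_add₀ hq]; ring_nf
    have e₂ : q ^ ((n : ℤ) * (N + 1 - 1)) * q ^ ((N : ℤ) + 1 - n) =
        q ^ ((n : ℤ) * N + N + 1 - n) := by
      rw [← zpow_add₀ hq]; ring_nf
    push_cast
    rw [qbin_succ_left N.cast_nonneg]
    linear_combination ((-1) ^ n * qbin N n) * e₁ + ((-1) ^ n * qbin N (n - 1)) * e₂
  have hlast : ∑ n ∈ Finset.range (N + 2), (-1) ^ n * q ^ ((n : ℤ) * (N - 1)) * qbin N n =
      altQbinSum N := by
    rw [Finset.sum_range_succ, qbin_of_lt (by push_cast; omega), mul_zero, add_zero, altQbinSum]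
  have hshift : ∑ n ∈ Finset.range (N + 2), (-1) ^ n * q ^ ((n : ℤ) * N + N + 1 - n) *
      qbin N (n - 1) = -q ^ (2 * (N : ℤ)) * altQbinSum N := by
    rw [Finset.sum_range_succ', Nat.cast_zero, zero_sub, qbin_of_neg (by omega), mul_zero,
      add_zero, altQbinSum, Finset.mul_sum]
    refine Finset.sum_congr rfl fun m _ => ?_
    have e : q ^ (((m + 1 : ℕ) : ℤ) * N + N + 1 - (m + 1 : ℕ)) =
        q ^ (2 * (N : ℤ)) * q ^ ((m : ℤ) * (N - 1)) := by
      rw [← zpow_add₀ hq]; push_cast; ring_nf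
    rw [e, Nat.cast_succ, add_sub_cancel_right, pow_succ]
    ring
  rw [hpascal, hlast, hshift]
  ring

lemma altQbinSum_eq (N : ℕ) : altQbinSum N = if N = 0 then 1 else 0 := by
  cases N with
  | zero => exact altQbinSum_zero
  | succ N =>
    rw [if_neg N.succ_ne_zero]
    induction N with
    | zero => simp [altQbinSum_succ]
    | succ N ih => rw [altQbinSum_succ, ih, mul_zero]

lemma qpow_Rent_mul_qpow_Rinvent (u v : ℤ) {N n : ℕ} (hn : n ≤ N) :
    qpow (2 * hf u * hf v - (n : ℚ) * (hf u - hf v) - (n : ℚ) * ((n : ℚ) + 1) / 2) *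
      qpow (-(2 * hf (v - 2 * (n : ℤ)) * hf (u + 2 * (n : ℤ))) +
        ((N - n : ℕ) : ℚ) * (hf (u + 2 * (n : ℤ)) - hf (v - 2 * (n : ℤ))) +
        ((N - n : ℕ) : ℚ) * (((N - n : ℕ) : ℚ) + 1) / 2) =
      X ^ (2 * (N : ℤ) * (u - v) + 2 * N * (N + 1)) * q ^ ((n : ℤ) * (N - 1)) := by
  rw [qpow_eq_X_zpow (k := 2 * u * v - 2 * n * (u - v) - 2 * n * (n + 1))
      (by push_cast [hf]; ring),
    qpow_eq_X_zpow (k := -(2 * (v - 2 * n) * (u + 2 * n)) + 2 * (N - n) * (u - v + 4 * n) +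
        2 * (N - n) * (N - n + 1))
      (by push_cast [hf, Nat.cast_sub hn]; ring),
    q_zpow, ← zpow_add₀ X_ne_zero, ← zpow_add₀ X_ne_zero]
  ring_nf

lemma Rent_mul_Rinvent {a b u v : ℤ} {N n : ℕ} (hu : |u| ≤ a) (hv : |v| ≤ b)
    (huN : |u + 2 * (N : ℤ)| ≤ a) (hvN : |v - 2 * (N : ℤ)| ≤ b) (hn : n ≤ N) :
    Rent a b u v n * Rinvent a b (u + 2 * (n : ℤ)) (v - 2 * (n : ℤ)) (N - n) =
      qfactz ((a - u) / 2) / qfactz ((a - u) / 2 - N) * qbin ((a + u) / 2 + N) N *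
          (-1) ^ N * (q - q⁻¹) ^ N * X ^ (2 * (N : ℤ) * (u - v) + 2 * N * (N + 1)) *
        ((-1) ^ n * q ^ ((n : ℤ) * (N - 1)) * qbin N n) := by
  rw [abs_le] at hu hv huN hvN
  have hm : ((N - n : ℕ) : ℤ) = N - n := by omega
  rw [Rent, Rinvent, if_pos ⟨abs_le.2 ⟨by omega, by omega⟩, abs_le.2 ⟨by omega, by omega⟩⟩,
    if_pos ⟨abs_le.2 ⟨by omega, by omega⟩, abs_le.2 ⟨by omega, by omega⟩⟩,
    show (a - (u + 2 * n)) / 2 = (a - u) / 2 - n by omega,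
    show (a + (u + 2 * n)) / 2 + ((N - n : ℕ) : ℤ) = (a + u) / 2 + N by omega]
  have hfact : qfact n * qbin ((a - u) / 2) n *
      (qfact (N - n) * qbin ((a - u) / 2 - n) ((N - n : ℕ) : ℤ)) =
      qfactz ((a - u) / 2) / qfactz ((a - u) / 2 - N) := by
    rw [qfact_mul_qbin (by omega), qfact_mul_qbin (by omega), hm, sub_sub_sub_cancel_right,
      div_mul_div_cancel₀ (qfactz_ne_zero (by omega))]
  have hbin := qbin_trinomial_revision (C := (a + u) / 2) (by omega) n.cast_nonneg
    (Nat.cast_le.2 hn)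
  rw [← hm] at hbin
  have hsign := pow_mul_neg_pow_sub (q - q⁻¹) hn
  rw [neg_sub] at hsign
  have hexp := qpow_Rent_mul_qpow_Rinvent u v hn
  linear_combination
    congrArg₂ (· * ·) (congrArg₂ (· * ·) hfact hbin) (congrArg₂ (· * ·) hsign hexp)

theorem Rmatrix_inverse_general (a b u v : ℤ)
    (hu : |u| ≤ a) (hv : |v| ≤ b) (N : ℕ) :
    (∑ n ∈ Finset.range (N + 1),
        Rent a b u v n * Rinvent a b (u + 2 * (n : ℤ)) (v - 2 * (n : ℤ)) (N - n))
      = if N = 0 then 1 else 0 := by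
  by_cases hN : |u + 2 * (N : ℤ)| ≤ a ∧ |v - 2 * (N : ℤ)| ≤ b
  · rw [Finset.sum_congr rfl fun n hn =>
        Rent_mul_Rinvent hu hv hN.1 hN.2 (Finset.mem_range_succ_iff.1 hn),
      ← Finset.mul_sum, ← altQbinSum, altQbinSum_eq]
    split_ifs with hN0
    · subst hN0
      obtain ⟨hu₁, hu₂⟩ := abs_le.1 hu
      simp [qbin_zero_right (show 0 ≤ (a + u) / 2 by omega),
        div_self (qfactz_ne_zero (show 0 ≤ (a - u) / 2 by omega))]
    · exact mul_zero _
  · have hN0 : N ≠ 0 := by rintro rfl; simp_all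
    rw [if_neg hN0]
    refine Finset.sum_eq_zero fun n hn => ?_
    have hn : n ≤ N := Finset.mem_range_succ_iff.1 hn
    rw [Rinvent, show u + 2 * (n : ℤ) + 2 * ((N - n : ℕ) : ℤ) = u + 2 * N by omega,
      show v - 2 * (n : ℤ) - 2 * ((N - n : ℕ) : ℤ) = v - 2 * N by omega, if_neg hN, mul_zero]

/-- `R₋ ∘ R` is the identity of `V^a ⊗ V^b`: for every `N ≥ 0` and
weights `u, v`, the sum over `n + m = N` of the products of the corresponding matrix
entries equals `δ_{N,0}`. -/
theorem Rmatrix_inverse (a b u v : ℤ) (ha : 0 ≤ a) (hb : 0 ≤ b)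
    (hu : |u| ≤ a) (hv : |v| ≤ b) (hua : 2 ∣ (a - u)) (hvb : 2 ∣ (b - v)) (N : ℕ) :
    (∑ n ∈ Finset.range (N + 1),
        Rent a b u v n * Rinvent a b (u + 2 * (n : ℤ)) (v - 2 * (n : ℤ)) (N - n))
      = if N = 0 then 1 else 0 :=
  Rmatrix_inverse_general a b u v hu hv N

end QSpin
end
end

section
/- If m and n are coprime positive integers and P ∈ ℤ[q, q^{−1}] is divisible in ℤ[q, q^{−1}] by both the quantum integers [m] and [n], then P is divisible by the product [m]·[n] in ℤ[q, q^{−1}]. -/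
/-!
Since `[a + b] = q^b [a] + q^{-a} [b]` and the monomials `q^k` are units, the Euclidean
algorithm on `m, n` runs in parallel on `[m], [n]` and shows that `[m]` and `[n]` are coprime
in `ℤ[q, q⁻¹]`; coprime divisors of `P` have a product dividing `P`.
-/

noncomputable section

namespace QSpin

/-- The quantum integer `[n] = q^{n−1} + q^{n−3} + ⋯ + q^{1−n}` as a Laurent polynomial
with integer coefficients (`LaurentPolynomial.T k` is the monomial `q^k`). -/
def qintL (n : ℕ) : LaurentPolynomial ℤ :=
  ∑ j ∈ Finset.range n, LaurentPolynomial.T ((n : ℤ) - 1 - 2 * (j : ℤ))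

open LaurentPolynomial

lemma qintL_one : qintL 1 = 1 := by
  simp [qintL]

lemma qintL_add (a b : ℕ) :
    qintL (a + b) = T (b : ℤ) * qintL a + T (-(a : ℤ)) * qintL b := by
  simp only [qintL, Finset.sum_range_add, Finset.mul_sum, ← T_add]
  congr 1 <;> refine Finset.sum_congr rfl fun j _ => congrArg T ?_ <;> push_cast <;> ring

lemma isCoprime_qintL_add_iff (a b : ℕ) :
    IsCoprime (qintL a) (qintL (a + b)) ↔ IsCoprime (qintL a) (qintL b) := by
  rw [qintL_add, IsCoprime.mul_add_right_right_iff,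
    isCoprime_mul_unit_left_right (isUnit_T _)]

lemma isCoprime_qintL_mul_add_iff (a k b : ℕ) :
    IsCoprime (qintL a) (qintL (a * k + b)) ↔ IsCoprime (qintL a) (qintL b) := by
  induction k with
  | zero => simp
  | succ k ih => rw [mul_add_one, add_right_comm, add_comm, isCoprime_qintL_add_iff, ih]

theorem isCoprime_qintL_of_coprime {m n : ℕ} (h : m.Coprime n) :
    IsCoprime (qintL m) (qintL n) := by
  induction m, n using Nat.gcd.induction with
  | H0 n =>
    rw [(Nat.coprime_zero_left n).mp h, qintL_one]
    exact isCoprime_one_right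
  | H1 m n _ ih =>
    have hmod : (n % m).Coprime m := by rwa [Nat.Coprime, ← Nat.gcd_rec]
    rw [← Nat.div_add_mod n m, isCoprime_qintL_mul_add_iff]
    exact (ih hmod).symm

theorem coprime_qint_dvd_general (m n : ℕ) (h : Nat.Coprime m n)
    (P : LaurentPolynomial ℤ) (h1 : qintL m ∣ P) (h2 : qintL n ∣ P) :
    qintL m * qintL n ∣ P :=
  (isCoprime_qintL_of_coprime h).mul_dvd h1 h2

/-- If `m` and `n` are coprime positive integers and
`P ∈ ℤ[q, q⁻¹]` is divisible by both `[m]` and `[n]`, then `P` is divisible by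
`[m]·[n]` in `ℤ[q, q⁻¹]`. -/
theorem coprime_qint_dvd (m n : ℕ) (hm : 0 < m) (hn : 0 < n) (h : Nat.Coprime m n)
    (P : LaurentPolynomial ℤ) (h1 : qintL m ∣ P) (h2 : qintL n ∣ P) :
    qintL m * qintL n ∣ P :=
  coprime_qint_dvd_general m n h P h1 h2

end QSpin
end
end

section
/- Non-integrality of a shadow-state weight: the rational function [3]² · ([5] − 1)⁶ / [4]! (where [4]! = [1][2][3][4]) is not a Laurent polynomial with integer coefficients; equivalently, [4]! does not divide [3]²([5]−1)⁶ in ℤ[q, q^{−1}]. -/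
/-!
If `q` is specialised to a unit `u` of a commutative ring with `u⁴ = -1`, then `[4] ↦ 0`
(so `[4]! ↦ 0`), while `[3] ↦ 1` and `[5] ↦ -1`, so `[3]²([5]-1)⁶ ↦ 64`. A divisibility
`[4]! ∣ [3]²([5]-1)⁶` would therefore force `64 = 0`; the unit `2` of `ZMod 17` satisfies
`2⁴ = -1` but `64 ≠ 0` there.
-/

noncomputable section

namespace QSpin

/-- The quantum factorial `[n]!` as a Laurent polynomial. -/
def qfactL (n : ℕ) : LaurentPolynomial ℤ := ∏ j ∈ Finset.range n, qintL (j + 1)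

open LaurentPolynomial

variable {R : Type*} [CommRing R]

theorem eval₂_qintL (u : Rˣ) (n : ℕ) :
    eval₂ (Int.castRingHom R) u (qintL n) =
      ∑ j ∈ Finset.range n, ((u ^ ((n : ℤ) - 1 - 2 * j) : Rˣ) : R) := by
  simp only [qintL, map_sum, eval₂_T]

section FourthPowerNegOne

variable (u : Rˣ) (hu : (u : R) ^ 4 = -1)
include hu

theorem inv_sq_eq_neg_sq : ((u⁻¹ : Rˣ) : R) ^ 2 = -(u : R) ^ 2 := by
  linear_combination
    ((u⁻¹ : Rˣ) : R) ^ 2 * hu - (u : R) ^ 2 * ((u : R) * (u⁻¹ : Rˣ) + 1) * u.mul_inv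

theorem eval₂_qintL_three : eval₂ (Int.castRingHom R) u (qintL 3) = 1 := by
  simp only [eval₂_qintL, Finset.sum_range_succ, Finset.range_one, Finset.sum_singleton,
    Nat.cast_ofNat, Nat.cast_one, CharP.cast_eq_zero, Int.reduceSub, Int.reduceMul, mul_zero,
    mul_one, sub_zero, sub_self, zpow_ofNat, zpow_neg, Units.val_pow_eq_pow_val,
    Units.inv_pow_eq_pow_inv, pow_zero, Units.val_one]
  linear_combination inv_sq_eq_neg_sq u hu

theorem eval₂_qintL_four : eval₂ (Int.castRingHom R) u (qintL 4) = 0 := by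
  simp only [eval₂_qintL, Finset.sum_range_succ, Finset.range_one, Finset.sum_singleton,
    Nat.cast_ofNat, Nat.cast_one, CharP.cast_eq_zero, Int.reduceSub, Int.reduceMul, mul_zero,
    mul_one, sub_zero, zpow_ofNat, zpow_neg, Units.val_pow_eq_pow_val,
    Units.inv_pow_eq_pow_inv, pow_one]
  linear_combination ((u⁻¹ : Rˣ) : R) * hu + ((u⁻¹ : Rˣ) : R) * inv_sq_eq_neg_sq u hu -
    ((u : R) ^ 3 + u) * u.mul_inv

theorem eval₂_qintL_five : eval₂ (Int.castRingHom R) u (qintL 5) = -1 := by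
  simp only [eval₂_qintL, Finset.sum_range_succ, Finset.range_one, Finset.sum_singleton,
    Nat.cast_ofNat, Nat.cast_one, CharP.cast_eq_zero, Int.reduceSub, Int.reduceMul, mul_zero,
    mul_one, sub_zero, sub_self, zpow_ofNat, zpow_neg, Units.val_pow_eq_pow_val,
    Units.inv_pow_eq_pow_inv, pow_zero, Units.val_one]
  linear_combination 2 * hu + (1 + ((u⁻¹ : Rˣ) : R) ^ 2 - (u : R) ^ 2) * inv_sq_eq_neg_sq u hu

theorem eval₂_qfactL_four : eval₂ (Int.castRingHom R) u (qfactL 4) = 0 := by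
  rw [qfactL, map_prod]
  exact Finset.prod_eq_zero (i := 3) (by simp) (eval₂_qintL_four u hu)

end FourthPowerNegOne

def twoUnitZMod17 : (ZMod 17)ˣ := ⟨2, 9, by decide, by decide⟩

/-- Non-integrality of a shadow-state weight: `[4]!` does not divide
`[3]²([5]−1)⁶` in `ℤ[q, q⁻¹]`; equivalently, the rational function
`[3]²([5]−1)⁶/[4]!` is not a Laurent polynomial with integer coefficients. -/
theorem shadow_weight_not_integral :
    ¬ (qfactL 4 ∣ (qintL 3) ^ 2 * (qintL 5 - 1) ^ 6) := by
  intro h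
  have hu : ((twoUnitZMod17 : (ZMod 17)ˣ) : ZMod 17) ^ 4 = -1 := by decide
  have hdvd := map_dvd (eval₂ (Int.castRingHom (ZMod 17)) twoUnitZMod17) h
  rw [eval₂_qfactL_four _ hu, map_mul, map_pow, map_pow, map_sub, map_one,
    eval₂_qintL_three _ hu, eval₂_qintL_five _ hu, zero_dvd_iff] at hdvd
  exact absurd hdvd (by decide)

end QSpin
end
end
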